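/- Let (B_t^H)_{t≥0} be a d-dimensional fractional Brownian motion with Hurst parameter H ∈ (0,1), and let b_1, …, b_m : ℝ^d → ℝ with b_j ∈ L^p(ℝ^d) for some p ≥ 1. Assume 0 < s_1 < ⋯ < s_m, and that the joint density of the increments (B_{s_1}^H, B_{s_2}^H − B_{s_1}^H, …, B_{s_m}^H − B_{s_{m-1}}^H) satisfies the Gaussian-type bound |p̃(x_1,…,x_m)| ≤ C ∏_{j=1}^m (s_j − s_{j-1})^{−dH} exp(−|x_j|²/(4(s_j − s_{j-1})^{2H})) (with s_0 = 0). Then |E[∏_{j=1}^m b_j(B_{s_j}^H)]| ≤ C_{H,d,p} ∏_{j=1}^m ‖b_j‖_{L^p} (s_j − s_{j-1})^{−Hd/p}. -/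

import Mathlib

/-!
Dropping the Gaussian factors (each is at most `1`), the density bound says that the law of the
increment vector is dominated by `c = Cb ∏ⱼ (sⱼ - sⱼ₋₁)^(-dH)` times Lebesgue measure. Positions
are partial sums of increments, and the partial-sum map preserves Lebesgue measure, so the law of
`(B_{s_j})_j` is dominated by `c • volume` as well. On a probability space the `L¹` norm is at most
the `Lᵖ` norm; the `Lᵖ` norm of `y ↦ ∏ⱼ bⱼ(yⱼ)` with respect to `c • volume` factorises by Tonelli
into `c^(1/p) ∏ⱼ ‖bⱼ‖_p`, and `c^(1/p) = Cb^(1/p) ∏ⱼ (sⱼ - sⱼ₋₁)^(-Hd/p)`.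
-/

open Real MeasureTheory

/-- `s (j-1)`, with the convention `s₀ = 0`. -/
noncomputable def prevTime {m : ℕ} (s : Fin m → ℝ) (j : Fin m) : ℝ :=
  if h : 0 < j.val then s ⟨j.val - 1, lt_of_le_of_lt (Nat.sub_le _ _) j.isLt⟩ else 0

open scoped ENNReal

theorem lintegral_fin_nat_prod_eq_prod {n : ℕ} {E : Type*} [MeasurableSpace E]
    {μ : Fin n → Measure E} [∀ i, SigmaFinite (μ i)]
    {f : Fin n → E → ℝ≥0∞} (hf : ∀ i, AEMeasurable (f i) (μ i)) :
    ∫⁻ x, ∏ i, f i (x i) ∂(Measure.pi μ) = ∏ i, ∫⁻ x, f i x ∂(μ i) := by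
  induction n with
  | zero => simp
  | succ n ih =>
    have htail : AEMeasurable (fun x : Fin n → E ↦ ∏ i, f i.succ (x i))
        (Measure.pi fun i : Fin n ↦ μ i.succ) :=
      Finset.aemeasurable_fun_prod _ fun (i : Fin n) _ ↦
        (hf i.succ).comp_quasiMeasurePreserving (Measure.quasiMeasurePreserving_eval _ i)
    calc
      _ = ∫⁻ x : E × (Fin n → E), f 0 x.1 * ∏ i : Fin n, f i.succ (x.2 i)
            ∂((μ 0).prod (Measure.pi fun i : Fin n ↦ μ i.succ)) := by
        rw [← ((measurePreserving_piFinSuccAbove μ 0).symm).lintegral_comp_emb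
          (MeasurableEquiv.measurableEmbedding _)]
        simp_rw [MeasurableEquiv.piFinSuccAbove_symm_apply, Fin.insertNthEquiv,
          Fin.prod_univ_succ, Fin.insertNth_zero, Equiv.coe_fn_mk, Fin.cons_succ,
          Fin.zero_succAbove, cast_eq, Fin.cons_zero]
      _ = (∫⁻ x, f 0 x ∂μ 0) * ∏ i : Fin n, ∫⁻ x, f i.succ x ∂(μ i.succ) := by
        rw [lintegral_prod_mul (hf 0) htail, ih fun i ↦ hf i.succ]
      _ = ∏ i, ∫⁻ x, f i x ∂(μ i) := by rw [Fin.prod_univ_succ]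

section PiProduct

variable {𝕜 E : Type*} [RCLike 𝕜] [MeasurableSpace E] {n : ℕ} {μ : Fin n → Measure E}
  [∀ i, SigmaFinite (μ i)] {f : Fin n → E → 𝕜}

lemma aestronglyMeasurable_pi_prod (hf : ∀ i, AEStronglyMeasurable (f i) (μ i)) :
    AEStronglyMeasurable (fun x : Fin n → E ↦ ∏ i, f i (x i)) (Measure.pi μ) :=
  Finset.aestronglyMeasurable_fun_prod _ fun i _ ↦
    (hf i).comp_quasiMeasurePreserving (Measure.quasiMeasurePreserving_eval μ i)

lemma eLpNorm_pi_prod (hf : ∀ i, AEStronglyMeasurable (f i) (μ i)) {p : ℝ≥0∞} (hp0 : p ≠ 0)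
    (hp : p ≠ ∞) :
    eLpNorm (fun x : Fin n → E ↦ ∏ i, f i (x i)) p (Measure.pi μ) =
      ∏ i, eLpNorm (f i) p (μ i) := by
  simp_rw [eLpNorm_eq_lintegral_rpow_enorm_toReal hp0 hp, enorm_eq_nnnorm, nnnorm_prod,
    ENNReal.ofNNReal_finsetProd, ← ENNReal.prod_rpow_of_nonneg ENNReal.toReal_nonneg]
  rw [ENNReal.prod_rpow_of_nonneg (by positivity)]
  exact congrArg (· ^ _) (lintegral_fin_nat_prod_eq_prod fun i ↦ (hf i).enorm.pow_const _)

lemma lintegral_enorm_pi_prod_le (hf : ∀ i, AEStronglyMeasurable (f i) (μ i))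
    {ν : Measure (Fin n → E)} [IsProbabilityMeasure ν] {c : ℝ≥0∞}
    (hν : ν ≤ c • Measure.pi μ) {p : ℝ≥0∞} (hp : 1 ≤ p) (hp' : p ≠ ∞) :
    ∫⁻ x, ‖∏ i, f i (x i)‖ₑ ∂ν ≤ c ^ (1 / p).toReal * ∏ i, eLpNorm (f i) p (μ i) := by
  have hF := aestronglyMeasurable_pi_prod hf
  calc ∫⁻ x, ‖∏ i, f i (x i)‖ₑ ∂ν
      = eLpNorm (fun x : Fin n → E ↦ ∏ i, f i (x i)) 1 ν := eLpNorm_one_eq_lintegral_enorm.symm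
    _ ≤ eLpNorm (fun x : Fin n → E ↦ ∏ i, f i (x i)) p ν :=
      eLpNorm_le_eLpNorm_of_exponent_le hp
        (hF.mono_ac (Measure.absolutelyContinuous_of_le_smul hν))
    _ ≤ eLpNorm (fun x : Fin n → E ↦ ∏ i, f i (x i)) p (c • Measure.pi μ) :=
      eLpNorm_mono_measure _ hν
    _ ≤ c ^ (1 / p).toReal * ∏ i, eLpNorm (f i) p (μ i) := by
      rw [← eLpNorm_pi_prod hf (by positivity) hp']
      exact eLpNorm_smul_measure_le _ _ _ _

lemma norm_integral_prod_comp_le {p : ℝ≥0∞} (hp : 1 ≤ p) (hp' : p ≠ ∞)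
    (hf : ∀ i, MemLp (f i) p (μ i)) {Ω : Type*} [MeasurableSpace Ω] {P : Measure Ω}
    [IsProbabilityMeasure P] {Y : Ω → Fin n → E} (hY : Measurable Y) {c : ℝ≥0∞} (hc : c ≠ ∞)
    (hlaw : P.map Y ≤ c • Measure.pi μ) :
    ‖∫ ω, ∏ i, f i (Y ω i) ∂P‖ ≤
      (c ^ (1 / p).toReal).toReal * ∏ i, (eLpNorm (f i) p (μ i)).toReal := by
  have := Measure.isProbabilityMeasure_map (μ := P) hY.aemeasurable
  have hF := aestronglyMeasurable_pi_prod fun i ↦ (hf i).1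
  rw [← ENNReal.toReal_prod, ← ENNReal.toReal_mul, ← toReal_enorm]
  refine ENNReal.toReal_mono ?_ ((enorm_integral_le_lintegral_enorm _).trans ?_)
  · exact ENNReal.mul_ne_top (by finiteness) (ENNReal.prod_ne_top fun i _ ↦ (hf i).2.ne)
  rw [← lintegral_map' (f := fun x : Fin n → E ↦ ‖∏ i, f i (x i)‖ₑ)
    (hF.mono_ac (Measure.absolutelyContinuous_of_le_smul hlaw)).enorm hY.aemeasurable]
  exact lintegral_enorm_pi_prod_le (fun i ↦ (hf i).1) hlaw hp hp'

end PiProduct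

section PartialSums

variable {G : Type*} [AddCommGroup G] {n : ℕ}

def partialSums (x : Fin n → G) (j : Fin n) : G := ∑ i ∈ Finset.Iic j, x i

-- Spelled with the same `dite` as the increment vector of `stmt_12`, which is then
-- `increments (fun j ↦ B (s j) ω)` by definition.
def increments (y : Fin n → G) (j : Fin n) : G :=
  y j - if _ : 0 < j.val then y ⟨j.val - 1, lt_of_le_of_lt (Nat.sub_le _ _) j.isLt⟩ else 0

lemma Fin.Iic_zero : Finset.Iic (0 : Fin (n + 1)) = {0} := Finset.Iic_bot

lemma partialSums_cons (y : G) (z : Fin n → G) :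
    partialSums (Fin.cons y z : Fin (n + 1) → G) = Fin.cons y fun j ↦ y + partialSums z j := by
  funext j
  cases j using Fin.cases with
  | zero => simp [partialSums, Fin.Iic_zero]
  | succ k =>
    have hIic : Finset.Iic k.succ = insert 0 ((Finset.Iic k).map (Fin.succEmb n)) := by
      ext i; cases i using Fin.cases <;> simp [Fin.succ_le_succ_iff]
    rw [partialSums, hIic, Finset.sum_insert (by simp), Finset.sum_map]
    simp [partialSums]

lemma partialSums_increments (y : Fin n → G) : partialSums (increments y) = y := by
  funext j
  cases n with
  | zero => exact j.elim0
  | succ n =>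
    induction j using Fin.induction with
    | zero => simp [partialSums, increments, Fin.Iic_zero]
    | succ i ih =>
      have hIic : Finset.Iic i.succ = insert i.succ (Finset.Iic i.castSucc) := by
        ext k; simp only [Finset.mem_Iic, Fin.le_iff_val_le_val, Fin.val_succ, Finset.mem_insert,
          Fin.ext_iff, Fin.val_castSucc]
        omega
      have hinc : increments y i.succ = y i.succ - y i.castSucc := by
        simp only [increments, Fin.val_succ, Nat.succ_pos, dite_true, Nat.add_sub_cancel]; rfl
      rw [partialSums, hIic, Finset.sum_insert (by simp), ← partialSums, ih, hinc, sub_add_cancel]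

lemma partialSums_comp_increments {Ω : Type*} (Y : Ω → Fin n → G) :
    partialSums ∘ (fun ω ↦ increments (Y ω)) = Y :=
  funext fun ω ↦ partialSums_increments (Y ω)

variable [MeasurableSpace G] [MeasurableAdd₂ G]

@[fun_prop]
lemma measurable_partialSums : Measurable (partialSums : (Fin n → G) → Fin n → G) := by
  unfold partialSums; fun_prop

lemma measurePreserving_partialSums (μ : Measure G) [SigmaFinite μ] [μ.IsAddLeftInvariant] :
    ∀ n : ℕ, MeasurePreserving (partialSums : (Fin n → G) → Fin n → G)
      (Measure.pi fun _ ↦ μ) (Measure.pi fun _ ↦ μ)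
  | 0 => by convert MeasurePreserving.id _
  | n + 1 => by
    -- Splitting off the first coordinate conjugates `partialSums` to a skew product of the
    -- identity with translates of `partialSums` on `n` coordinates.
    let e := MeasurableEquiv.piFinSuccAbove (fun _ : Fin (n + 1) ↦ G) 0
    have hshear : MeasurePreserving
        (fun yz : G × (Fin n → G) ↦ (yz.1, fun j ↦ yz.1 + partialSums yz.2 j))
        (μ.prod (Measure.pi fun _ ↦ μ)) (μ.prod (Measure.pi fun _ ↦ μ)) := by
      refine (MeasurePreserving.id μ).skew_product (g := fun y z j ↦ y + partialSums z j)
        (by fun_prop) (ae_of_all _ fun y ↦ ?_)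
      have : (fun z : Fin n → G ↦ fun j ↦ y + partialSums z j) =
          (fun w ↦ (fun _ ↦ y) + w) ∘ partialSums := rfl
      rw [this, ← Measure.map_map (by fun_prop) (by fun_prop),
        (measurePreserving_partialSums μ n).map_eq, map_add_left_eq_self]
    have : (partialSums : (Fin (n + 1) → G) → Fin (n + 1) → G) = e.symm ∘
        (fun yz : G × (Fin n → G) ↦ (yz.1, fun j ↦ yz.1 + partialSums yz.2 j)) ∘ e := by
      funext x
      conv_lhs => rw [← Fin.cons_self_tail x, partialSums_cons]
      simp [e, MeasurableEquiv.piFinSuccAbove_symm_apply, Fin.consEquiv]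
    have he := measurePreserving_piFinSuccAbove (fun _ : Fin (n + 1) ↦ μ) 0
    rw [this]
    exact he.symm.comp (hshear.comp he)

variable {Ω : Type*} [MeasurableSpace Ω] {Y : Ω → Fin n → G}

lemma Measurable.of_increments (hX : Measurable fun ω ↦ increments (Y ω)) : Measurable Y :=
  partialSums_comp_increments Y ▸ measurable_partialSums.comp hX

lemma map_le_smul_pi_of_map_increments_le {P : Measure Ω}
    {μ : Measure G} [SigmaFinite μ] [μ.IsAddLeftInvariant] {c : ℝ≥0∞}
    (hX : Measurable fun ω ↦ increments (Y ω))
    (hlaw : P.map (fun ω ↦ increments (Y ω)) ≤ c • Measure.pi fun _ ↦ μ) :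
    P.map Y ≤ c • Measure.pi fun _ ↦ μ := by
  rw [← partialSums_comp_increments Y, ← Measure.map_map measurable_partialSums hX]
  calc _ ≤ (c • Measure.pi fun _ ↦ μ).map partialSums :=
        Measure.map_mono hlaw measurable_partialSums
    _ = c • Measure.pi fun _ ↦ μ := by
      rw [Measure.map_smul, (measurePreserving_partialSums μ n).map_eq]

end PartialSums

lemma sub_prevTime_pos {m : ℕ} {s : Fin m → ℝ} (hs : StrictMono s) (hpos : ∀ j, 0 < s j)
    (j : Fin m) : 0 < s j - prevTime s j := by
  unfold prevTime
  split_ifs with hj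
  · exact sub_pos.mpr (hs (Fin.mk_lt_of_lt_val (by omega)))
  · simpa using hpos j

lemma withDensity_ofReal_le_smul {α : Type*} [MeasurableSpace α] {μ : Measure α} {ρ : α → ℝ}
    {M : ℝ} (hρ : ∀ x, ρ x ≤ M) :
    μ.withDensity (fun x ↦ ENNReal.ofReal (ρ x)) ≤ ENNReal.ofReal M • μ := by
  rw [← withDensity_const]
  exact withDensity_mono (ae_of_all _ fun x ↦ ENNReal.ofReal_le_ofReal (hρ x))

lemma prod_mul_exp_neg_div_le {ι : Type*} (t : Finset ι) {a c e : ι → ℝ} (ha : ∀ i, 0 ≤ a i)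
    (hc : ∀ i, 0 ≤ c i) (he : ∀ i, 0 ≤ e i) :
    ∏ i ∈ t, a i * exp (-c i / e i) ≤ ∏ i ∈ t, a i :=
  Finset.prod_le_prod (fun i _ ↦ mul_nonneg (ha i) (exp_nonneg _)) fun i _ ↦
    mul_le_of_le_one_right (ha i) (exp_le_one_iff.mpr
      (div_nonpos_of_nonpos_of_nonneg (neg_nonpos.mpr (hc i)) (he i)))

theorem stmt_12_general (H : ℝ) (d : ℕ) (p Cb : ℝ) (hp : 1 ≤ p) (hCb : 0 < Cb) :
    ∃ C : ℝ, 0 < C ∧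
      ∀ (m : ℕ) (_ : 0 < m)
        (Ω : Type) (_ : MeasurableSpace Ω) (μ : Measure Ω) (_ : IsProbabilityMeasure μ)
        (B : ℝ → Ω → EuclideanSpace ℝ (Fin d))
        (s : Fin m → ℝ) (b : Fin m → EuclideanSpace ℝ (Fin d) → ℝ)
        (ptilde : (Fin m → EuclideanSpace ℝ (Fin d)) → ℝ),
        StrictMono s → (∀ j, 0 < s j) →
        (∀ j, MemLp (b j) (ENNReal.ofReal p) volume) →
        -- `ptilde` is the joint density of the vector of increments of `B^H`
        (Measurable fun ω => fun j : Fin m =>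
          B (s j) ω - (if h : 0 < j.val then
            B (s ⟨j.val - 1, lt_of_le_of_lt (Nat.sub_le _ _) j.isLt⟩) ω else 0)) →
        (Measure.map (fun ω => fun j : Fin m =>
            B (s j) ω - (if h : 0 < j.val then
              B (s ⟨j.val - 1, lt_of_le_of_lt (Nat.sub_le _ _) j.isLt⟩) ω else 0)) μ =
          volume.withDensity (fun x => ENNReal.ofReal (ptilde x))) →
        -- Gaussian-type bound on the joint density
        (∀ x : Fin m → EuclideanSpace ℝ (Fin d),
          |ptilde x| ≤ Cb * ∏ j : Fin m,
            (s j - prevTime s j) ^ (-(d : ℝ) * H) *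
              Real.exp (-‖x j‖ ^ 2 / (4 * (s j - prevTime s j) ^ (2 * H)))) →
        |∫ ω, ∏ j : Fin m, b j (B (s j) ω) ∂μ| ≤
          C * ∏ j : Fin m,
            (eLpNorm (b j) (ENNReal.ofReal p) volume).toReal *
              (s j - prevTime s j) ^ (-(H * d) / p) := by
  refine ⟨Cb ^ (1 / p), by positivity, ?_⟩
  intro m _ Ω _ μ _ B s b ptilde hs hspos hb hX hmap hbound
  have hΔ := sub_prevTime_pos hs hspos
  have hΔpow (r : ℝ) (j : Fin m) : 0 ≤ (s j - prevTime s j) ^ r := (rpow_pos_of_pos (hΔ j) r).le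
  set M := Cb * ∏ j, (s j - prevTime s j) ^ (-(d : ℝ) * H)
  have hM0 : 0 ≤ M := mul_nonneg hCb.le (Finset.prod_nonneg fun j _ ↦ hΔpow _ j)
  have hρ (x : Fin m → EuclideanSpace ℝ (Fin d)) : ptilde x ≤ M :=
    (le_abs_self _).trans <| (hbound x).trans <| mul_le_mul_of_nonneg_left
      (prod_mul_exp_neg_div_le _ (hΔpow _) (fun j ↦ sq_nonneg _)
        fun j ↦ mul_nonneg zero_le_four (hΔpow _ j)) hCb.le
  have hlaw : μ.map (fun ω j ↦ B (s j) ω) ≤ ENNReal.ofReal M • volume :=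
    map_le_smul_pi_of_map_increments_le hX (hmap ▸ withDensity_ofReal_le_smul hρ)
  have hp' : 1 ≤ ENNReal.ofReal p := by simpa using ENNReal.ofReal_le_ofReal hp
  refine (norm_integral_prod_comp_le hp' ENNReal.ofReal_ne_top hb (.of_increments hX)
    ENNReal.ofReal_ne_top hlaw).trans_eq ?_
  have hM : M ^ (1 / p) = Cb ^ (1 / p) * ∏ j, (s j - prevTime s j) ^ (-(H * d) / p) := by
    rw [mul_rpow hCb.le (Finset.prod_nonneg fun j _ ↦ hΔpow _ j),
      ← finsetProd_rpow _ _ fun j _ ↦ hΔpow _ j]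
    congr 1
    refine Finset.prod_congr rfl fun j _ ↦ ?_
    rw [← rpow_mul (hΔ j).le]
    ring_nf
  rw [ENNReal.toReal_div, ENNReal.toReal_one, ENNReal.toReal_ofReal (by linarith),
    ← ENNReal.toReal_rpow, ENNReal.toReal_ofReal hM0, hM, mul_assoc, ← Finset.prod_mul_distrib]
  exact congrArg _ (Finset.prod_congr rfl fun _ _ ↦ mul_comm _ _)

theorem stmt_12 (H : ℝ) (d : ℕ) (p Cb : ℝ) (hH0 : 0 < H) (hH1 : H < 1) (hd : 1 ≤ d)
    (hp : 1 ≤ p) (hCb : 0 < Cb) :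
    ∃ C : ℝ, 0 < C ∧
      ∀ (m : ℕ) (_ : 0 < m)
        (Ω : Type) (_ : MeasurableSpace Ω) (μ : Measure Ω) (_ : IsProbabilityMeasure μ)
        (B : ℝ → Ω → EuclideanSpace ℝ (Fin d))
        (s : Fin m → ℝ) (b : Fin m → EuclideanSpace ℝ (Fin d) → ℝ)
        (ptilde : (Fin m → EuclideanSpace ℝ (Fin d)) → ℝ),
        StrictMono s → (∀ j, 0 < s j) →
        (∀ j, MemLp (b j) (ENNReal.ofReal p) volume) →
        -- `ptilde` is the joint density of the vector of increments of `B^H`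
        (Measurable fun ω => fun j : Fin m =>
          B (s j) ω - (if h : 0 < j.val then
            B (s ⟨j.val - 1, lt_of_le_of_lt (Nat.sub_le _ _) j.isLt⟩) ω else 0)) →
        (Measure.map (fun ω => fun j : Fin m =>
            B (s j) ω - (if h : 0 < j.val then
              B (s ⟨j.val - 1, lt_of_le_of_lt (Nat.sub_le _ _) j.isLt⟩) ω else 0)) μ =
          volume.withDensity (fun x => ENNReal.ofReal (ptilde x))) →
        -- Gaussian-type bound on the joint density
        (∀ x : Fin m → EuclideanSpace ℝ (Fin d),
          |ptilde x| ≤ Cb * ∏ j : Fin m,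
            (s j - prevTime s j) ^ (-(d : ℝ) * H) *
              Real.exp (-‖x j‖ ^ 2 / (4 * (s j - prevTime s j) ^ (2 * H)))) →
        |∫ ω, ∏ j : Fin m, b j (B (s j) ω) ∂μ| ≤
          C * ∏ j : Fin m,
            (eLpNorm (b j) (ENNReal.ofReal p) volume).toReal *
              (s j - prevTime s j) ^ (-(H * d) / p) :=
  stmt_12_general H d p Cb hp hCb
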